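/- arXiv:1809.08453 — 8 statements merged into one kernel-verified Lean document; each statement's English description precedes it below -/
import Mathlib

section
/- For every stable marriage instance there exists at least one stable matching. -/
/-- A stable marriage instance: finite sets `M` of men and `W` of women of equal
positive cardinality, with strict total preference orders for each agent. -/
structure SMInstance (M W : Type) [Fintype M] [Fintype W] where
  card_eq : Fintype.card M = Fintype.card W
  card_pos : 1 ≤ Fintype.card M
  prefM : M → W → W → Prop
  prefW : W → M → M → Prop
  prefM_sto : ∀ m, IsStrictTotalOrder W (prefM m)
  prefW_sto : ∀ w, IsStrictTotalOrder M (prefW w)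

/-- A pair `(m, w)` blocks the matching `μ` if `w ≻_m μ(m)` and `m ≻_w μ⁻¹(w)`. -/
def SMInstance.Blocks {M W : Type} [Fintype M] [Fintype W]
    (I : SMInstance M W) (μ : M ≃ W) (m : M) (w : W) : Prop :=
  I.prefM m w (μ m) ∧ I.prefW w m (μ.symm w)

/-- A matching is stable if no pair blocks it. -/
def SMInstance.Stable {M W : Type} [Fintype M] [Fintype W]
    (I : SMInstance M W) (μ : M ≃ W) : Prop :=
  ∀ m w, ¬ I.Blocks μ m w

open Finset

section GS

/-- In a finite nonempty set with a strict total order there is a top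
(most preferred) element. -/
theorem SM.exists_top {α : Type} (r : α → α → Prop) [IsStrictTotalOrder α r]
    {S : Finset α} (h : S.Nonempty) : ∃ a ∈ S, ∀ b ∈ S, b ≠ a → r a b := by
  classical
  letI : LinearOrder α := linearOrderOfSTO r
  refine ⟨S.min' h, S.min'_mem h, fun b hb hne => ?_⟩
  exact (S.min'_le b hb).lt_of_ne (Ne.symm hne)

theorem SM.asymm {α : Type} (r : α → α → Prop) [IsStrictTotalOrder α r]
    {a b : α} (h : r a b) (h' : r b a) : False :=
  irrefl_of r a (trans_of r h h')

variable {M W : Type} [Fintype M] [Fintype W]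

open scoped Classical in
/-- The set of women man `m` has not yet been rejected by. -/
noncomputable def SM.pool (R : M → Finset W) (m : M) : Finset W := univ \ R m

noncomputable def SM.propOf (I : SMInstance M W) (m : M) (S : Finset W) : W :=
  if h : S.Nonempty then
    (@SM.exists_top W (I.prefM m) (I.prefM_sto m) _ h).choose
  else (Fintype.card_pos_iff.mp (Nat.lt_of_lt_of_le Nat.zero_lt_one
    (I.card_eq ▸ I.card_pos))).some

/-- The current proposal of man `m`: his favourite woman among those who have
not rejected him (junk value if there are none). -/
noncomputable def SM.prop (I : SMInstance M W) (R : M → Finset W) (m : M) : W :=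
  SM.propOf I m (SM.pool R m)

theorem SM.mem_pool {R : M → Finset W} {m : M} {w : W} :
    w ∈ SM.pool R m ↔ w ∉ R m := by
  unfold SM.pool
  simp

theorem SM.prop_spec (I : SMInstance M W) {R : M → Finset W} {m : M}
    (h : (SM.pool R m).Nonempty) :
    SM.prop I R m ∈ SM.pool R m ∧
      ∀ b ∈ SM.pool R m, b ≠ SM.prop I R m → I.prefM m (SM.prop I R m) b := by
  have hs := (@SM.exists_top W (I.prefM m) (I.prefM_sto m) _ h).choose_spec
  rw [SM.prop, SM.propOf, dif_pos h]
  exact hs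

theorem SM.prop_congr (I : SMInstance M W) {R R' : M → Finset W} (m : M)
    (h : R m = R' m) : SM.prop I R m = SM.prop I R' m := by
  unfold SM.prop SM.pool
  rw [h]

/-- The key invariant: whenever `w` has rejected `m`, she currently has a
proposer she prefers to `m`. -/
def SM.Inv (I : SMInstance M W) (R : M → Finset W) : Prop :=
  ∀ m w, w ∈ R m → ∃ m', SM.prop I R m' = w ∧ I.prefW w m' m

theorem SM.pool_nonempty (I : SMInstance M W) {R : M → Finset W}
    (hI : SM.Inv I R) (m : M) : (SM.pool R m).Nonempty := by
  classical
  by_contra h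
  have hall : ∀ w : W, w ∈ R m := by
    intro w
    by_contra hw
    exact h ⟨w, SM.mem_pool.mpr hw⟩
  choose g hg1 hg2 using fun w => hI m w (hall w)
  have ginj : Function.Injective g := fun a b hab => by rw [← hg1 a, ← hg1 b, hab]
  have hne : ∀ w, g w ≠ m := by
    intro w e
    haveI := I.prefW_sto w
    exact irrefl_of (I.prefW w) m (e ▸ hg2 w)
  have h1 : (univ.image g).card = Fintype.card W := by
    rw [Finset.card_image_of_injective _ ginj, Finset.card_univ]
  have h2 : univ.image g ⊆ univ.erase m := by
    intro x hx
    rcases Finset.mem_image.mp hx with ⟨w, _, rfl⟩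
    exact Finset.mem_erase.mpr ⟨hne w, mem_univ _⟩
  have h3 := Finset.card_le_card h2
  rw [h1, Finset.card_erase_of_mem (mem_univ m), Finset.card_univ] at h3
  have h4 := I.card_eq
  have h5 := I.card_pos
  omega

/-- `m` is rejected if some rival proposes to the same woman and she prefers
the rival. -/
def SM.rejected (I : SMInstance M W) (R : M → Finset W) (m : M) : Prop :=
  ∃ m', SM.prop I R m' = SM.prop I R m ∧ I.prefW (SM.prop I R m) m' m

open scoped Classical in
/-- One round of deferred acceptance: every rejected man adds his current
proposal to his rejection set. -/
noncomputable def SM.step (I : SMInstance M W) (R : M → Finset W) : M → Finset W :=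
  fun m => if SM.rejected I R m then insert (SM.prop I R m) (R m) else R m

theorem SM.subset_step (I : SMInstance M W) (R : M → Finset W) (m : M) :
    R m ⊆ SM.step I R m := by
  classical
  unfold SM.step
  split
  · exact Finset.subset_insert _ _
  · exact subset_rfl

theorem SM.claim (I : SMInstance M W) {R : M → Finset W} {w : W} {m : M}
    (h : ∃ m0, SM.prop I R m0 = w ∧ I.prefW w m0 m) :
    ∃ m', SM.prop I (SM.step I R) m' = w ∧ I.prefW w m' m := by
  classical
  haveI := I.prefW_sto w
  obtain ⟨m0, hm0, hp0⟩ := h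
  set P : Finset M := univ.filter (fun x => SM.prop I R x = w) with hP
  have hm0P : m0 ∈ P := Finset.mem_filter.mpr ⟨mem_univ _, hm0⟩
  obtain ⟨a, haP, hbest⟩ := SM.exists_top (I.prefW w) ⟨m0, hm0P⟩
  have haw : SM.prop I R a = w := (Finset.mem_filter.mp haP).2
  have hnr : ¬ SM.rejected I R a := by
    rintro ⟨m'', h1, h2⟩
    rw [haw] at h1 h2
    have hm''P : m'' ∈ P := Finset.mem_filter.mpr ⟨mem_univ _, h1⟩
    have hne : m'' ≠ a := by
      intro e
      rw [e] at h2
      exact irrefl_of (I.prefW w) a h2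
    exact SM.asymm (I.prefW w) h2 (hbest m'' hm''P hne)
  have hstep : SM.step I R a = R a := if_neg hnr
  refine ⟨a, (SM.prop_congr I a hstep).trans haw, ?_⟩
  by_cases he : m0 = a
  · rwa [he] at hp0
  · exact trans_of (I.prefW w) (hbest m0 hm0P he) hp0

theorem SM.inv_step (I : SMInstance M W) {R : M → Finset W}
    (hI : SM.Inv I R) : SM.Inv I (SM.step I R) := by
  classical
  intro m w hw
  by_cases hr : SM.rejected I R m
  · rw [SM.step, if_pos hr] at hw
    rcases Finset.mem_insert.mp hw with rfl | hw
    · obtain ⟨m'', h1, h2⟩ := hr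
      exact SM.claim I ⟨m'', h1, h2⟩
    · exact SM.claim I (hI m w hw)
  · rw [SM.step, if_neg hr] at hw
    exact SM.claim I (hI m w hw)

theorem SM.sum_lt (I : SMInstance M W) {R : M → Finset W}
    (hI : SM.Inv I R) (h : SM.step I R ≠ R) :
    ∑ m, (R m).card + 1 ≤ ∑ m, (SM.step I R m).card := by
  classical
  obtain ⟨m, hm⟩ : ∃ m, SM.step I R m ≠ R m := by
    by_contra h'
    push_neg at h'
    exact h (funext h')
  have hlt : (R m).card < (SM.step I R m).card :=
    Finset.card_lt_card ((SM.subset_step I R m).ssubset_of_ne (Ne.symm hm))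
  have := Finset.sum_lt_sum (fun i (_ : i ∈ univ) =>
      Finset.card_le_card (SM.subset_step I R i)) ⟨m, mem_univ m, hlt⟩
  omega

theorem SM.sum_le (R : M → Finset W) :
    ∑ m, (R m).card ≤ Fintype.card M * Fintype.card W := by
  classical
  calc ∑ m, (R m).card ≤ ∑ _m : M, Fintype.card W :=
        Finset.sum_le_sum fun i _ => Finset.card_le_univ _
    _ = Fintype.card M * Fintype.card W := by
        rw [Finset.sum_const, Finset.card_univ, smul_eq_mul]

theorem SM.exists_fix (I : SMInstance M W) :
    ∃ R : M → Finset W, SM.Inv I R ∧ SM.step I R = R := by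
  classical
  set R0 : M → Finset W := fun _ => ∅ with hR0
  have hIk : ∀ k, SM.Inv I ((SM.step I)^[k] R0) := by
    intro k
    induction k with
    | zero => exact fun m w hw => absurd hw (Finset.notMem_empty w)
    | succ n ih =>
      rw [Function.iterate_succ_apply']
      exact SM.inv_step I ih
  by_contra h
  push_neg at h
  have key : ∀ k, k ≤ ∑ m, (((SM.step I)^[k] R0) m).card := by
    intro k
    induction k with
    | zero => exact Nat.zero_le _
    | succ n ih =>
      have h2 := SM.sum_lt I (hIk n) (h _ (hIk n))
      rw [Function.iterate_succ_apply']
      omega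
  have hb := key (Fintype.card M * Fintype.card W + 1)
  have hc := SM.sum_le ((SM.step I)^[Fintype.card M * Fintype.card W + 1] R0)
  omega

end GS

/-- For every stable marriage instance there exists at least one stable matching. -/
theorem exists_stable_matching {M W : Type} [Fintype M] [Fintype W]
    (I : SMInstance M W) : ∃ μ : M ≃ W, I.Stable μ := by
  classical
  obtain ⟨R, hI, hfix⟩ := SM.exists_fix I
  have hnopool : ∀ m, SM.prop I R m ∉ R m := by
    intro m hmem
    exact SM.mem_pool.mp ((SM.prop_spec I (SM.pool_nonempty I hI m)).1) hmem
  have hnr : ∀ m, ¬ SM.rejected I R m := by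
    intro m hr
    have h1 := congrFun hfix m
    rw [SM.step, if_pos hr] at h1
    exact hnopool m (h1 ▸ Finset.mem_insert_self _ _)
  have hinj : Function.Injective (SM.prop I R) := by
    intro m1 m2 he
    by_contra hne
    haveI := I.prefW_sto (SM.prop I R m1)
    rcases trichotomous_of (I.prefW (SM.prop I R m1)) m1 m2 with h | h | h
    · exact hnr m2 ⟨m1, he, by rw [← he]; exact h⟩
    · exact hne h
    · exact hnr m1 ⟨m2, he.symm, h⟩
  have hbij : Function.Bijective (SM.prop I R) :=
    (Fintype.bijective_iff_injective_and_card _).mpr ⟨hinj, I.card_eq⟩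
  refine ⟨Equiv.ofBijective _ hbij, ?_⟩
  rintro m w ⟨h1, h2⟩
  have hμ : ∀ x, Equiv.ofBijective _ hbij x = SM.prop I R x := fun _ => rfl
  rw [hμ m] at h1
  haveI := I.prefM_sto m
  have hwR : w ∈ R m := by
    by_contra hwR
    have hwpool : w ∈ SM.pool R m := SM.mem_pool.mpr hwR
    have hne : w ≠ SM.prop I R m := by
      intro e
      rw [e] at h1
      exact irrefl_of (I.prefM m) _ h1
    exact SM.asymm (I.prefM m) h1
      ((SM.prop_spec I (SM.pool_nonempty I hI m)).2 w hwpool hne)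
  obtain ⟨m', hm'1, hm'2⟩ := hI m w hwR
  have hsymm : (Equiv.ofBijective _ hbij).symm w = m' :=
    (Equiv.symm_apply_eq _).mpr ((hμ m').symm ▸ hm'1.symm)
  rw [hsymm] at h2
  haveI := I.prefW_sto w
  exact SM.asymm (I.prefW w) hm'2 h2
end

section
/- For every stable marriage instance there exists a stable matching μ_M (the man-optimal stable matching) such that for every stable matching μ and every man m, either μ_M(m) = μ(m) or μ_M(m) ≻_m μ(m); i.e., every man weakly prefers his partner in μ_M to his partner in any stable matching. -/
namespace SMInstance

variable {M W : Type} [Fintype M] [Fintype W] (I : SMInstance M W)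

instance (m : M) : IsStrictTotalOrder W (I.prefM m) := I.prefM_sto m

instance (w : W) : IsStrictTotalOrder M (I.prefW w) := I.prefW_sto w

def NoStableRejection (R : Set (M × W)) : Prop :=
  ∀ ν : M ≃ W, I.Stable ν → ∀ m, (m, ν m) ∉ R

section Propose

variable [Nonempty W]

open Classical in
noncomputable def favourite (m : M) (S : Set W) : W :=
  if h : S.Nonempty then (Finite.wellFounded_of_trans_of_irrefl (I.prefM m)).min S h
  else Classical.arbitrary W

/-- The favourite of `m` among the women who have not rejected him, `(m, w) ∈ R` recording that
`w` has rejected `m`. -/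
noncomputable def propose (R : Set (M × W)) (m : M) : W :=
  I.favourite m {w | (m, w) ∉ R}

def RejectionsJustified (R : Set (M × W)) : Prop :=
  ∀ m w, (m, w) ∈ R → ∃ m', I.propose R m' = w ∧ I.prefW w m' m

variable {I} {R : Set (M × W)}

lemma favourite_mem {m : M} {S : Set W} (h : S.Nonempty) : I.favourite m S ∈ S := by
  rw [favourite, dif_pos h]
  exact WellFounded.min_mem _ S h

lemma eq_favourite_or_prefM_favourite {m : M} {S : Set W} {w : W} (hw : w ∈ S) :
    w = I.favourite m S ∨ I.prefM m (I.favourite m S) w := by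
  rw [favourite, dif_pos ⟨w, hw⟩]
  exact (trichotomous_of (I.prefM m) _ _).resolve_left (WellFounded.not_lt_min _ _ hw)

lemma propose_not_mem {m : M} (h : ∃ w, (m, w) ∉ R) : (m, I.propose R m) ∉ R :=
  favourite_mem h

lemma eq_propose_or_prefM_propose {m : M} {w : W} (hw : (m, w) ∉ R) :
    w = I.propose R m ∨ I.prefM m (I.propose R m) w :=
  eq_favourite_or_prefM_favourite hw

lemma propose_insert_of_ne {m m₁ : M} {w : W} (hm : m ≠ m₁) :
    I.propose (insert (m₁, w) R) m = I.propose R m := by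
  unfold propose
  congr 1
  ext w'
  simp [hm]

lemma exists_not_mem_of_rejectionsJustified (hR : I.RejectionsJustified R) (m : M) :
    ∃ w, (m, w) ∉ R := by
  -- Otherwise choosing, for each woman, the man she holds gives a section of `propose`, which
  -- by counting is also a retraction; so `m` is held by a woman who prefers him to himself.
  by_contra! hall
  choose f hf using fun w => hR m w (hall w)
  have hinv : Function.RightInverse (I.propose R) f :=
    Function.LeftInverse.rightInverse_of_card_le (fun w => (hf w).1) I.card_eq.le
  have hself := (hf (I.propose R m)).2
  rw [hinv m] at hself
  exact irrefl_of _ _ hself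

lemma stable_ofBijective_propose (hR : I.RejectionsJustified R)
    (hbij : Function.Bijective (I.propose R)) : I.Stable (Equiv.ofBijective _ hbij) := by
  rintro m w ⟨hm, hw⟩
  have hrejected : (m, w) ∈ R := by
    by_contra hnot
    rcases eq_propose_or_prefM_propose hnot with heq | hpref
    · rw [Equiv.ofBijective_apply, ← heq] at hm
      exact irrefl_of _ _ hm
    · exact irrefl_of _ _ (trans_of _ hm hpref)
  obtain ⟨m', hm', hpref⟩ := hR m w hrejected
  rw [(Equiv.ofBijective _ hbij).symm_apply_eq.mpr hm'.symm] at hw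
  exact irrefl_of _ _ (trans_of _ hw hpref)

lemma propose_eq_or_prefM_of_stable (hR : I.NoStableRejection R) {ν : M ≃ W} (hν : I.Stable ν)
    (m : M) : I.propose R m = ν m ∨ I.prefM m (I.propose R m) (ν m) :=
  (eq_propose_or_prefM_propose (hR ν hν m)).imp_left Eq.symm

variable {m₁ m₂ : M} {w : W}

lemma rejectionsJustified_insert (hR : I.RejectionsJustified R) (h₁ : I.propose R m₁ = w)
    (h₂ : I.propose R m₂ = w) (hpref : I.prefW w m₂ m₁) :
    I.RejectionsJustified (insert (m₁, w) R) := by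
  have hne : m₂ ≠ m₁ := fun h => irrefl_of _ _ (h ▸ hpref)
  have h₂' : I.propose (insert (m₁, w) R) m₂ = w := (propose_insert_of_ne hne).trans h₂
  rintro m w' hmem
  rcases Set.mem_insert_iff.mp hmem with heq | hmem
  · obtain ⟨rfl, rfl⟩ := Prod.mk.inj heq
    exact ⟨m₂, h₂', hpref⟩
  obtain ⟨m', hm', hpref'⟩ := hR m w' hmem
  by_cases hm'₁ : m' = m₁
  · subst hm'₁
    obtain rfl : w' = w := hm'.symm.trans h₁
    exact ⟨m₂, h₂', trans_of _ hpref hpref'⟩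
  · exact ⟨m', (propose_insert_of_ne hm'₁).trans hm', hpref'⟩

lemma noStableRejection_insert (hR : I.NoStableRejection R) (h₂ : I.propose R m₂ = w)
    (hpref : I.prefW w m₂ m₁) : I.NoStableRejection (insert (m₁, w) R) := by
  intro ν hν m hmem
  rcases Set.mem_insert_iff.mp hmem with heq | hmem
  · obtain ⟨rfl, hνm⟩ := Prod.mk.inj heq
    -- `m₂` prefers `w` to `ν m₂`, and `w` prefers `m₂` to her partner `m` in `ν`.
    rcases eq_propose_or_prefM_propose (hR ν hν m₂) with h | h
    · have : m₂ = m := ν.injective (h.trans (h₂.trans hνm.symm))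
      exact irrefl_of _ _ (this ▸ hpref)
    · exact hν m₂ w ⟨h₂ ▸ h, by rwa [ν.symm_apply_eq.mpr hνm.symm]⟩
  · exact hR ν hν m hmem

lemma exists_ssuperset_of_not_injective_propose (hJ : I.RejectionsJustified R)
    (hS : I.NoStableRejection R) (hinj : ¬ Function.Injective (I.propose R)) :
    ∃ R', R ⊂ R' ∧ I.RejectionsJustified R' ∧ I.NoStableRejection R' := by
  obtain ⟨a, b, hab, hne⟩ := Function.not_injective_iff.mp hinj
  wlog hpref : I.prefW (I.propose R a) b a generalizing a b
  · refine this b a hab.symm hne.symm ?_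
    rw [← hab]
    exact (trichotomous_of (I.prefW (I.propose R a)) a b).resolve_right (·.elim hne hpref)
  exact ⟨_, Set.ssubset_insert (propose_not_mem (exists_not_mem_of_rejectionsJustified hJ a)),
    rejectionsJustified_insert hJ rfl hab.symm hpref, noStableRejection_insert hS hab.symm hpref⟩

end Propose

end SMInstance

/-- There exists a man-optimal stable matching: a stable matching `μM` such that
every man weakly prefers his partner in `μM` to his partner in any stable matching. -/
theorem exists_man_optimal_stable_matching {M W : Type} [Fintype M] [Fintype W]
    (I : SMInstance M W) :
    ∃ μM : M ≃ W, I.Stable μM ∧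
      ∀ μ : M ≃ W, I.Stable μ → ∀ m : M, μM m = μ m ∨ I.prefM m (μM m) (μ m) := by
  have : Nonempty W := Fintype.card_pos_iff.mp (I.card_eq ▸ I.card_pos)
  let invariantStates := {R : Set (M × W) | I.RejectionsJustified R ∧ I.NoStableRejection R}
  obtain ⟨R, ⟨hJ, hS⟩, hmax⟩ :=
    (Set.toFinite invariantStates).exists_maximal ⟨∅, fun _ _ h => h.elim, fun _ _ _ h => h⟩
  have hinj : Function.Injective (I.propose R) := by
    by_contra hinj
    obtain ⟨R', hlt, hR'⟩ := I.exists_ssuperset_of_not_injective_propose hJ hS hinj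
    exact hlt.not_subset (hmax hR' hlt.subset)
  have hbij := (Fintype.bijective_iff_injective_and_card _).mpr ⟨hinj, I.card_eq⟩
  exact ⟨_, I.stable_ofBijective_propose hJ hbij,
    fun _ hν => I.propose_eq_or_prefM_of_stable hS hν⟩
end

section
/- Let μ_M be a stable matching such that for every stable matching μ and every man m, either μ_M(m) = μ(m) or μ_M(m) ≻_m μ(m). Then μ_M is simultaneously worst for all women: for every stable matching μ and every woman w, either μ⁻¹(w) = μ_M⁻¹(w) or μ⁻¹(w) ≻_w μ_M⁻¹(w). -/
namespace SMInstance

variable {M W : Type} [Fintype M] [Fintype W] {I : SMInstance M W}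

theorem Stable.prefW_symm_of_prefM {μ : M ≃ W} (hμ : I.Stable μ) {m : M} {w : W}
    (h : I.prefM m w (μ m)) : I.prefW w (μ.symm w) m := by
  have hne : μ.symm w ≠ m := by
    rintro rfl
    rw [Equiv.apply_symm_apply] at h
    exact (I.prefM_sto (μ.symm w)).irrefl w h
  have hnot : ¬ I.prefW w m (μ.symm w) := fun h' => hμ m w ⟨h, h'⟩
  by_contra hnlt
  exact hne ((I.prefW_sto w).trichotomous _ _ hnlt hnot)

end SMInstance

theorem man_optimal_is_woman_pessimal_general {M W : Type} [Fintype M] [Fintype W]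
    (I : SMInstance M W) (μM : M ≃ W)
    (hopt : ∀ μ : M ≃ W, I.Stable μ → ∀ m : M, μM m = μ m ∨ I.prefM m (μM m) (μ m)) :
    ∀ μ : M ≃ W, I.Stable μ → ∀ w : W,
      μ.symm w = μM.symm w ∨ I.prefW w (μ.symm w) (μM.symm w) := by
  intro μ hμ w
  rcases hopt μ hμ (μM.symm w) with heq | hpref
  · left
    rw [Equiv.apply_symm_apply] at heq
    exact μ.symm_apply_eq.mpr heq
  · right
    rw [Equiv.apply_symm_apply] at hpref
    exact hμ.prefW_symm_of_prefM hpref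

/-- If `μM` is a stable matching that is simultaneously best for all men, then it is
simultaneously worst for all women. -/
theorem man_optimal_is_woman_pessimal {M W : Type} [Fintype M] [Fintype W]
    (I : SMInstance M W) (μM : M ≃ W) (hμM : I.Stable μM)
    (hopt : ∀ μ : M ≃ W, I.Stable μ → ∀ m : M, μM m = μ m ∨ I.prefM m (μM m) (μ m)) :
    ∀ μ : M ≃ W, I.Stable μ → ∀ w : W,
      μ.symm w = μM.symm w ∨ I.prefW w (μ.symm w) (μM.symm w) :=
  man_optimal_is_woman_pessimal_general I μM hopt
end

section
/- Let μ and μ' be two stable matchings of the same stable marriage instance such that every man weakly prefers μ to μ' (for every man m, either μ(m) = μ'(m) or μ(m) ≻_m μ'(m)). Then every woman weakly prefers μ' to μ: for every woman w, either μ'⁻¹(w) = μ⁻¹(w) or μ'⁻¹(w) ≻_w μ⁻¹(w). -/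
namespace SMInstance

variable {M W : Type} [Fintype M] [Fintype W] (I : SMInstance M W)

theorem prefW_symm_of_stable_of_prefM {μ μ' : M ≃ W} (hμ' : I.Stable μ') {m : M}
    (hm : I.prefM m (μ m) (μ' m)) : I.prefW (μ m) (μ'.symm (μ m)) m := by
  have := I.prefW_sto (μ m)
  have := I.prefM_sto m
  rcases trichotomous_of (I.prefW (μ m)) m (μ'.symm (μ m)) with hblock | heq | hpref
  · exact absurd ⟨hm, hblock⟩ (hμ' m (μ m))
  · rw [← μ'.symm_apply_eq.mp heq.symm] at hm
    exact absurd hm (irrefl _)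
  · exact hpref

end SMInstance

theorem men_better_implies_women_worse_general {M W : Type} [Fintype M] [Fintype W]
    (I : SMInstance M W) (μ μ' : M ≃ W) (hμ' : I.Stable μ')
    (hmen : ∀ m : M, μ m = μ' m ∨ I.prefM m (μ m) (μ' m)) :
    ∀ w : W, μ'.symm w = μ.symm w ∨ I.prefW w (μ'.symm w) (μ.symm w) := by
  intro w
  obtain ⟨m, rfl⟩ := μ.surjective w
  rw [Equiv.symm_apply_apply]
  rcases hmen m with heq | hpref
  · left
    rw [heq, Equiv.symm_apply_apply]
  · exact Or.inr (I.prefW_symm_of_stable_of_prefM hμ' hpref)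

/-- If every man weakly prefers the stable matching `μ` to the stable matching `μ'`,
then every woman weakly prefers `μ'` to `μ`. -/
theorem men_better_implies_women_worse {M W : Type} [Fintype M] [Fintype W]
    (I : SMInstance M W) (μ μ' : M ≃ W) (hμ : I.Stable μ) (hμ' : I.Stable μ')
    (hmen : ∀ m : M, μ m = μ' m ∨ I.prefM m (μ m) (μ' m)) :
    ∀ w : W, μ'.symm w = μ.symm w ∨ I.prefW w (μ'.symm w) (μ.symm w) :=
  men_better_implies_women_worse_general I μ μ' hμ' hmen
end

section
/- Let μ and μ' be two stable matchings of the same stable marriage instance. Define σ : M → W by letting σ(m) be whichever of μ(m) and μ'(m) the man m prefers (with respect to ≻_m, taking σ(m) = μ(m) if μ(m) = μ'(m)). Then σ is a bijection from M to W and σ is a stable matching; moreover, every woman w receives in σ the ≻_w-worse of her two partners μ⁻¹(w) and μ'⁻¹(w). -/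
namespace SMInstance

variable {M W : Type} [Fintype M] [Fintype W] (I : SMInstance M W)

def IsMenBest (μ μ' : M ≃ W) (σ : M → W) : Prop :=
  ∀ m, (σ m = μ m ∨ σ m = μ' m) ∧ ¬ I.prefM m (μ m) (σ m) ∧ ¬ I.prefM m (μ' m) (σ m)

variable {I} {μ μ' e : M ≃ W} {σ : M → W}

theorem isMenBest_of_prefM (hσ_eq : ∀ m : M, μ m = μ' m → σ m = μ m)
    (hσ_pref : ∀ m : M, I.prefM m (μ m) (μ' m) → σ m = μ m)
    (hσ_pref' : ∀ m : M, I.prefM m (μ' m) (μ m) → σ m = μ' m) :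
    I.IsMenBest μ μ' σ := by
  intro m
  rcases trichotomous_of (I.prefM m) (μ m) (μ' m) with h | h | h
  · rw [hσ_pref m h]
    exact ⟨.inl rfl, irrefl_of _ _, asymm_of _ h⟩
  · rw [hσ_eq m h, ← h]
    exact ⟨.inl rfl, irrefl_of _ _, irrefl_of _ _⟩
  · rw [hσ_pref' m h]
    exact ⟨.inr rfl, asymm_of _ h, irrefl_of _ _⟩

theorem IsMenBest.symm (hσ : I.IsMenBest μ μ' σ) : I.IsMenBest μ' μ σ :=
  fun m => ⟨(hσ m).1.symm, (hσ m).2.symm⟩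

theorem Stable.not_prefW_of_not_prefM (hμ : I.Stable μ) {m : M} {w : W}
    (h : ¬ I.prefM m (μ m) w) : ¬ I.prefW w m (μ.symm w) := by
  by_cases hw : μ m = w
  · rw [← hw, μ.symm_apply_apply]
    exact irrefl_of _ _
  · exact fun hpref => hμ m w
      ⟨(trichotomous_of (I.prefM m) w (μ m)).resolve_right (not_or.2 ⟨Ne.symm hw, h⟩), hpref⟩

theorem IsMenBest.eq_of_apply_eq (hμ : I.Stable μ) (hμ' : I.Stable μ') (hσ : I.IsMenBest μ μ' σ)
    {a b : M} (ha : σ a = μ a) (hb : σ b = μ' b) (hab : σ a = σ b) : a = b := by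
  have hμ'_symm : μ'.symm (σ a) = b := by rw [hab, hb, μ'.symm_apply_apply]
  have hμ_symm : μ.symm (σ b) = a := by rw [← hab, ha, μ.symm_apply_apply]
  have ha_not_pref : ¬ I.prefW (σ a) a b := hμ'_symm ▸ hμ'.not_prefW_of_not_prefM (hσ a).2.2
  have hb_not_pref : ¬ I.prefW (σ a) b a := hab ▸ hμ_symm ▸ hμ.not_prefW_of_not_prefM (hσ b).2.1
  exact ((trichotomous_of (I.prefW (σ a)) a b).resolve_left ha_not_pref).resolve_right hb_not_pref

theorem IsMenBest.injective (hμ : I.Stable μ) (hμ' : I.Stable μ') (hσ : I.IsMenBest μ μ' σ) :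
    Function.Injective σ := by
  intro a b hab
  rcases (hσ a).1 with ha | ha <;> rcases (hσ b).1 with hb | hb
  · exact μ.injective (ha ▸ hb ▸ hab)
  · exact hσ.eq_of_apply_eq hμ hμ' ha hb hab
  · exact hσ.symm.eq_of_apply_eq hμ' hμ ha hb hab
  · exact μ'.injective (ha ▸ hb ▸ hab)

theorem IsMenBest.bijective (hμ : I.Stable μ) (hμ' : I.Stable μ') (hσ : I.IsMenBest μ μ' σ) :
    Function.Bijective σ :=
  (Fintype.bijective_iff_injective_and_card σ).2 ⟨hσ.injective hμ hμ', I.card_eq⟩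

theorem IsMenBest.symm_apply_eq_or (hσ : I.IsMenBest μ μ' σ) (he : ∀ m, e m = σ m) (w : W) :
    e.symm w = μ.symm w ∨ e.symm w = μ'.symm w := by
  have hσe : σ (e.symm w) = w := by rw [← he, e.apply_symm_apply]
  rcases (hσ (e.symm w)).1 with h | h
  · exact .inl (μ.eq_symm_apply.2 (h ▸ hσe))
  · exact .inr (μ'.eq_symm_apply.2 (h ▸ hσe))

theorem IsMenBest.not_prefW_symm_apply (hμ : I.Stable μ) (hσ : I.IsMenBest μ μ' σ)
    (he : ∀ m, e m = σ m) (w : W) : ¬ I.prefW w (e.symm w) (μ.symm w) :=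
  hμ.not_prefW_of_not_prefM (by simpa only [← he, e.apply_symm_apply] using (hσ (e.symm w)).2.1)

theorem IsMenBest.stable (hμ : I.Stable μ) (hμ' : I.Stable μ') (hσ : I.IsMenBest μ μ' σ)
    (he : ∀ m, e m = σ m) : I.Stable e := by
  rintro m w ⟨hm, hw⟩
  rw [he] at hm
  rcases hσ.symm_apply_eq_or he w with h | h
  · exact hμ m w ⟨trans_trichotomous_right hm (hσ m).2.1, h ▸ hw⟩
  · exact hμ' m w ⟨trans_trichotomous_right hm (hσ m).2.2, h ▸ hw⟩

end SMInstance

/-- Lattice "meet for men": if each man is given the one of his partners in the two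
stable matchings `μ`, `μ'` that he prefers, the result is a bijection and a stable
matching, and each woman gets the worse of her two partners. -/
theorem men_best_of_two_is_stable {M W : Type} [Fintype M] [Fintype W]
    (I : SMInstance M W) (μ μ' : M ≃ W) (hμ : I.Stable μ) (hμ' : I.Stable μ')
    (σ : M → W)
    (hσ_eq : ∀ m : M, μ m = μ' m → σ m = μ m)
    (hσ_pref : ∀ m : M, I.prefM m (μ m) (μ' m) → σ m = μ m)
    (hσ_pref' : ∀ m : M, I.prefM m (μ' m) (μ m) → σ m = μ' m) :
    Function.Bijective σ ∧
      ∃ e : M ≃ W, (∀ m : M, e m = σ m) ∧ I.Stable e ∧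
        ∀ w : W,
          (μ.symm w = μ'.symm w → e.symm w = μ.symm w) ∧
          (I.prefW w (μ.symm w) (μ'.symm w) → e.symm w = μ'.symm w) ∧
          (I.prefW w (μ'.symm w) (μ.symm w) → e.symm w = μ.symm w) := by
  have hσ : I.IsMenBest μ μ' σ := SMInstance.isMenBest_of_prefM hσ_eq hσ_pref hσ_pref'
  have hbij := hσ.bijective hμ hμ'
  let e := Equiv.ofBijective σ hbij
  have he : ∀ m, e m = σ m := fun _ => rfl
  refine ⟨hbij, e, he, hσ.stable hμ hμ' he, fun w => ?_⟩
  have hworse := hσ.not_prefW_symm_apply hμ he w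
  have hworse' := hσ.symm.not_prefW_symm_apply hμ' he w
  rcases hσ.symm_apply_eq_or he w with h | h <;> rw [h] at hworse hworse' ⊢
  · exact ⟨fun _ => rfl, fun hp => absurd hp hworse', fun _ => rfl⟩
  · exact ⟨Eq.symm, fun _ => rfl, fun hp => absurd hp hworse⟩
end

section
/- The generalized Gini index with strictly decreasing weights satisfies the Pigou–Dalton transfer principle: let λ ∈ ℝ^N satisfy λ_1 > λ_2 > … > λ_N ≥ 0, let d ∈ ℝ^N have nonnegative entries, let i, j be indices with d_i < d_j, and let ε ∈ ℝ with 0 < ε < d_j − d_i. Define d' by d'_i = d_i + ε, d'_j = d_j − ε, and d'_k = d_k for all k ∉ {i, j}. Then GGI_λ(d') < GGI_λ(d). -/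
/-- The vector `d` sorted in nonincreasing order: `sortedDesc d i = d↓_i`. -/
noncomputable def sortedDesc {N : ℕ} (d : Fin N → ℝ) : Fin N → ℝ :=
  fun i => d (Tuple.sort d i.rev)

/-- The generalized Gini index `GGI_λ(d) = Σ_i λ_i d↓_i`. -/
noncomputable def GGI {N : ℕ} (lam d : Fin N → ℝ) : ℝ :=
  ∑ i, lam i * sortedDesc d i

lemma sortedDesc_antitone {N : ℕ} (d : Fin N → ℝ) : Antitone (sortedDesc d) := by
  intro p q hpq
  exact Tuple.monotone_sort d (Fin.rev_le_rev.mpr hpq)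

/-- Rearrangement: any permuted weighted sum is at most the GGI. -/
lemma sum_perm_le_GGI {N : ℕ} (lam d : Fin N → ℝ) (hlam : Antitone lam)
    (σ : Equiv.Perm (Fin N)) : ∑ k, lam k * d (σ k) ≤ GGI lam d := by
  set e : Equiv.Perm (Fin N) := Fin.revPerm.trans (Tuple.sort d) with he
  have hde : ∀ k, sortedDesc d k = d (e k) := fun k => rfl
  have hmono : Monovary lam (sortedDesc d) :=
    hlam.monovary (sortedDesc_antitone d)
  have hle := hmono.sum_smul_comp_perm_le_sum_smul (σ := σ.trans e.symm)
  simp only [smul_eq_mul] at hle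
  calc ∑ k, lam k * d (σ k)
      = ∑ k, lam k * sortedDesc d ((σ.trans e.symm) k) := by
        refine Finset.sum_congr rfl fun k _ => ?_
        rw [hde]
        simp
    _ ≤ ∑ k, lam k * sortedDesc d k := hle
    _ = GGI lam d := rfl

/-- The GGI with strictly decreasing nonnegative weights satisfies the Pigou–Dalton
transfer principle. -/
theorem ggi_pigou_dalton {N : ℕ} (hN : 0 < N) (lam d : Fin N → ℝ)
    (hlam : StrictAnti lam) (hlam_nonneg : ∀ i, 0 ≤ lam i)
    (hd : ∀ i, 0 ≤ d i) (i j : Fin N) (hij : d i < d j)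
    (ε : ℝ) (hε : 0 < ε) (hε' : ε < d j - d i)
    (d' : Fin N → ℝ) (hd'i : d' i = d i + ε) (hd'j : d' j = d j - ε)
    (hd'k : ∀ k, k ≠ i → k ≠ j → d' k = d k) :
    GGI lam d' < GGI lam d := by
  have hij_ne : i ≠ j := fun h => absurd hij (by rw [h]; exact lt_irrefl _)
  set e : Equiv.Perm (Fin N) := Fin.revPerm.trans (Tuple.sort d') with he
  have hG' : GGI lam d' = ∑ k, lam k * d' (e k) := rfl
  set a := e.symm i with ha
  set b := e.symm j with hb
  have hea : e a = i := e.apply_symm_apply i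
  have heb : e b = j := e.apply_symm_apply j
  have hab : a ≠ b := fun h => hij_ne (by rw [← hea, ← heb, h])
  have hlam_anti : Antitone lam := hlam.antitone
  -- decompose the sum for d'
  have hsum1 : ∑ k, lam k * d' (e k)
      = (∑ k, lam k * d (e k)) + (ε * lam a - ε * lam b) := by
    have h1 : ∀ k : Fin N, lam k * d' (e k)
        = lam k * d (e k)
          + ((if k = a then ε * lam a else 0) - (if k = b then ε * lam b else 0)) := by
      intro k
      rcases eq_or_ne k a with rfl | hka
      · rw [if_pos rfl, if_neg hab, hea, hd'i]; ring
      · rcases eq_or_ne k b with rfl | hkb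
        · rw [if_neg hka, if_pos rfl, heb, hd'j]; ring
        · have h1 : e k ≠ i := fun h => hka (by rw [← hea] at h; exact e.injective h)
          have h2 : e k ≠ j := fun h => hkb (by rw [← heb] at h; exact e.injective h)
          rw [if_neg hka, if_neg hkb, hd'k _ h1 h2]; ring
    rw [Finset.sum_congr rfl fun k _ => h1 k, Finset.sum_add_distrib,
      Finset.sum_sub_distrib]
    simp
  rcases lt_trichotomy a b with hlt | heq | hgt
  · -- a < b : lam b < lam a; compare with swapped permutation
    have hlab : lam b < lam a := hlam hlt
    set τ : Equiv.Perm (Fin N) := (Equiv.swap a b).trans e with hτ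
    have hsum2 : ∑ k, lam k * d (τ k)
        = (∑ k, lam k * d (e k))
          + ((d j - d i) * lam a - (d j - d i) * lam b) := by
      have h1 : ∀ k : Fin N, lam k * d (τ k)
          = lam k * d (e k)
            + ((if k = a then (d j - d i) * lam a else 0)
              - (if k = b then (d j - d i) * lam b else 0)) := by
        intro k
        rcases eq_or_ne k a with rfl | hka
        · have : τ a = j := by simp [hτ, Equiv.swap_apply_left, heb]
          rw [this, if_pos rfl, if_neg hab, hea]; ring
        · rcases eq_or_ne k b with rfl | hkb
          · have : τ b = i := by simp [hτ, Equiv.swap_apply_right, hea]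
            rw [this, if_neg hka, if_pos rfl, heb]; ring
          · have : τ k = e k := by simp [hτ, Equiv.swap_apply_of_ne_of_ne hka hkb]
            rw [this, if_neg hka, if_neg hkb]; ring
      rw [Finset.sum_congr rfl fun k _ => h1 k, Finset.sum_add_distrib,
        Finset.sum_sub_distrib]
      simp
    have key : ε * lam a - ε * lam b < (d j - d i) * lam a - (d j - d i) * lam b := by
      have : ε * (lam a - lam b) < (d j - d i) * (lam a - lam b) :=
        mul_lt_mul_of_pos_right hε' (by linarith)
      linarith
    calc GGI lam d' = (∑ k, lam k * d (e k)) + (ε * lam a - ε * lam b) := by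
          rw [hG', hsum1]
      _ < (∑ k, lam k * d (e k))
          + ((d j - d i) * lam a - (d j - d i) * lam b) := by linarith
      _ = ∑ k, lam k * d (τ k) := hsum2.symm
      _ ≤ GGI lam d := sum_perm_le_GGI lam d hlam_anti τ
  · exact absurd heq hab
  · -- b < a : lam a < lam b, so the correction term is negative
    have hlab : lam a < lam b := hlam hgt
    calc GGI lam d' = (∑ k, lam k * d (e k)) + (ε * lam a - ε * lam b) := by
          rw [hG', hsum1]
      _ < ∑ k, lam k * d (e k) := by nlinarith
      _ ≤ GGI lam d := sum_perm_le_GGI lam d hlam_anti e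
end

section
/- (Rounding inequality, women's side.) Let P be a finite set, let c be a real number, let ω : P → ℝ satisfy ω(ρ) ≥ 0 for all ρ ∈ P and c − Σ_{ρ ∈ P} ω(ρ) ≥ 0, and let ŷ : P → [0,1]. Define y : P → {0,1} by y(ρ) = 1 if ŷ(ρ) ≥ 1/2 and y(ρ) = 0 otherwise. Then c − Σ_{ρ ∈ P} ŷ(ρ)·ω(ρ) ≥ (1/2)·(c − Σ_{ρ ∈ P} y(ρ)·ω(ρ)). -/
/-- Rounding inequality, women's side: rounding a fractional closed set of rotations
at threshold 1/2 at most doubles a woman's disutility. -/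
theorem rounding_ineq_women {P : Type} [Fintype P] (c : ℝ)
    (ω : P → ℝ) (hω : ∀ ρ, 0 ≤ ω ρ) (hc : 0 ≤ c - ∑ ρ, ω ρ)
    (yhat : P → ℝ) (hyhat0 : ∀ ρ, 0 ≤ yhat ρ) (hyhat1 : ∀ ρ, yhat ρ ≤ 1)
    (y : P → ℝ) (hy : ∀ ρ, y ρ = if 1 / 2 ≤ yhat ρ then 1 else 0) :
    (1 / 2) * (c - ∑ ρ, y ρ * ω ρ) ≤ c - ∑ ρ, yhat ρ * ω ρ := by
  have key : ∑ ρ, (yhat ρ - y ρ / 2) * ω ρ ≤ ∑ ρ, (1 / 2) * ω ρ := by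
    apply Finset.sum_le_sum
    intro ρ _
    apply mul_le_mul_of_nonneg_right _ (hω ρ)
    rw [hy ρ]
    split_ifs with h
    · linarith [hyhat1 ρ]
    · linarith [le_of_not_ge h]
  have := Finset.sum_sub_distrib (f := fun ρ => yhat ρ * ω ρ) (g := fun ρ => y ρ / 2 * ω ρ)
    (s := (Finset.univ : Finset P))
  simp only [sub_mul] at key
  rw [Finset.sum_sub_distrib, ← Finset.mul_sum] at key
  have h2 : ∑ ρ, y ρ / 2 * ω ρ = (1/2) * ∑ ρ, y ρ * ω ρ := by
    rw [Finset.mul_sum]; apply Finset.sum_congr rfl; intros; ring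
  rw [h2] at key
  linarith
end

section
/- Let n ≥ 2 be an integer and define Δ_u = Σ_{j=1}^{n} (n^j + n^{j+1})·(j + 1 + n^{−j}). Let S ⊆ {1,…,n} with |S| = k, and let c : {1,…,n} \ S → ℝ be any function with c(j) ∈ {j + 1, j + 1 + n^{−j}} for each j ∉ S. Put g = Σ_{j ∈ S} (n^j + n^{j+1})·(j + 1) + Σ_{j ∉ S} ( n^{j+1}·(j + 1 + n^{−j}) + n^j·c(j) ). Then Δ_u − (k + 1)(n + 1) < g ≤ Δ_u − k(n + 1). -/
/-!
Each clause index `j` contributes `(nʲ + nʲ⁺¹)(j + 1 + n⁻ʲ)` to `Δu`. An unsatisfied clause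
contributes exactly `n + 1` less to `g`, while a satisfied one contributes either `1` or `0` less.
Hence `Δu - g = k(n + 1) + r` with `0 ≤ r ≤ n - k ≤ n < n + 1`.
-/

open Finset

theorem sum_sub_sum_add_sum_sdiff {ι M : Type*} [DecidableEq ι] [AddCommGroup M]
    {s t : Finset ι} (hst : s ⊆ t) (u v w : ι → M) :
    ∑ j ∈ t, u j - (∑ j ∈ s, v j + ∑ j ∈ t \ s, w j)
      = ∑ j ∈ s, (u j - v j) + ∑ j ∈ t \ s, (u j - w j) := by
  rw [← sum_sdiff hst, sum_sub_distrib, sum_sub_distrib]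
  abel

theorem sum_sub_sum_add_sum_sdiff_mem_Icc {ι : Type*} [DecidableEq ι]
    {s t : Finset ι} (hst : s ⊆ t) {u v w : ι → ℝ} {d : ℝ}
    (hv : ∀ j ∈ s, u j - v j = d) (hw : ∀ j ∈ t \ s, u j - w j ∈ Set.Icc (0 : ℝ) 1) :
    ∑ j ∈ t, u j - (∑ j ∈ s, v j + ∑ j ∈ t \ s, w j)
      ∈ Set.Icc (#s * d) (#s * d + #(t \ s)) := by
  rw [Set.mem_Icc, sum_sub_sum_add_sum_sdiff hst, sum_congr rfl hv, sum_const, nsmul_eq_mul]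
  have hlo : 0 ≤ ∑ j ∈ t \ s, (u j - w j) := sum_nonneg fun j hj => (hw j hj).1
  have hhi : ∑ j ∈ t \ s, (u j - w j) ≤ #(t \ s) := by
    simpa using sum_le_sum fun j hj => (hw j hj).2
  constructor <;> linarith

theorem pow_add_pow_succ_mul_add_inv_pow_sub {K : Type*} [Field K] {x : K} (hx : x ≠ 0)
    (j : ℕ) (a : K) :
    (x ^ j + x ^ (j + 1)) * (a + (x ^ j)⁻¹) - (x ^ j + x ^ (j + 1)) * a = x + 1 := by
  field_simp
  ring

theorem pow_add_pow_succ_mul_add_inv_pow_sub_eq_zero_or_one {K : Type*} [Field K] {x : K}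
    (hx : x ≠ 0) (j : ℕ) (a : K) {c : K}
    (hc : c = a ∨ c = a + (x ^ j)⁻¹) :
    (x ^ j + x ^ (j + 1)) * (a + (x ^ j)⁻¹) - (x ^ (j + 1) * (a + (x ^ j)⁻¹) + x ^ j * c)
        = 0 ∨
      (x ^ j + x ^ (j + 1)) * (a + (x ^ j)⁻¹) - (x ^ (j + 1) * (a + (x ^ j)⁻¹) + x ^ j * c)
        = 1 := by
  rcases hc with rfl | rfl
  · right
    field_simp
    ring
  · left
    ring

theorem lemma1_bounds_general (n : ℕ) (S : Finset ℕ) (hS : S ⊆ Finset.Icc 1 n)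
    (k : ℕ) (hk : S.card = k) (c : ℕ → ℝ)
    (hc : ∀ j ∈ Finset.Icc 1 n \ S,
      c j = (j : ℝ) + 1 ∨ c j = (j : ℝ) + 1 + ((n : ℝ) ^ j)⁻¹) :
    let Δu : ℝ := ∑ j ∈ Finset.Icc 1 n,
      ((n : ℝ) ^ j + (n : ℝ) ^ (j + 1)) * ((j : ℝ) + 1 + ((n : ℝ) ^ j)⁻¹)
    let g : ℝ := (∑ j ∈ S, ((n : ℝ) ^ j + (n : ℝ) ^ (j + 1)) * ((j : ℝ) + 1))
      + ∑ j ∈ Finset.Icc 1 n \ S,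
          ((n : ℝ) ^ (j + 1) * ((j : ℝ) + 1 + ((n : ℝ) ^ j)⁻¹) + (n : ℝ) ^ j * c j)
    Δu - ((k : ℝ) + 1) * ((n : ℝ) + 1) < g ∧ g ≤ Δu - (k : ℝ) * ((n : ℝ) + 1) := by
  intro Δu g
  have hn0 : ∀ j ∈ Finset.Icc 1 n, (n : ℝ) ≠ 0 := fun j hj => by
    have := mem_Icc.mp hj
    exact_mod_cast (by omega : n ≠ 0)
  obtain ⟨hlo, hhi⟩ := sum_sub_sum_add_sum_sdiff_mem_Icc hS
    (u := fun j : ℕ => ((n : ℝ) ^ j + (n : ℝ) ^ (j + 1)) * (j + 1 + ((n : ℝ) ^ j)⁻¹))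
    (v := fun j : ℕ => ((n : ℝ) ^ j + (n : ℝ) ^ (j + 1)) * (j + 1))
    (w := fun j : ℕ => (n : ℝ) ^ (j + 1) * (j + 1 + ((n : ℝ) ^ j)⁻¹) + (n : ℝ) ^ j * c j)
    (fun j hj => pow_add_pow_succ_mul_add_inv_pow_sub (hn0 j (hS hj)) j _)
    (fun j hj => by
      rcases pow_add_pow_succ_mul_add_inv_pow_sub_eq_zero_or_one
        (hn0 j (sdiff_subset hj)) j _ (hc j hj) with h | h <;> simp only [h] <;> norm_num)
  have hcard : (#(Finset.Icc 1 n \ S) : ℝ) ≤ n := by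
    exact_mod_cast (card_le_card sdiff_subset).trans (Nat.card_Icc 1 n).le
  rw [hk] at hlo hhi
  constructor <;> linarith

/-- Quantitative content of Lemma 1 of the NP-hardness reduction: the GGI value `g`
of the stable marriage corresponding to a truth assignment with set `S` of
unsatisfied clauses (|S| = k) satisfies `Δu − (k+1)(n+1) < g ≤ Δu − k(n+1)`. -/
theorem lemma1_bounds (n : ℕ) (hn : 2 ≤ n) (S : Finset ℕ) (hS : S ⊆ Finset.Icc 1 n)
    (k : ℕ) (hk : S.card = k) (c : ℕ → ℝ)
    (hc : ∀ j ∈ Finset.Icc 1 n \ S,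
      c j = (j : ℝ) + 1 ∨ c j = (j : ℝ) + 1 + ((n : ℝ) ^ j)⁻¹) :
    let Δu : ℝ := ∑ j ∈ Finset.Icc 1 n,
      ((n : ℝ) ^ j + (n : ℝ) ^ (j + 1)) * ((j : ℝ) + 1 + ((n : ℝ) ^ j)⁻¹)
    let g : ℝ := (∑ j ∈ S, ((n : ℝ) ^ j + (n : ℝ) ^ (j + 1)) * ((j : ℝ) + 1))
      + ∑ j ∈ Finset.Icc 1 n \ S,
          ((n : ℝ) ^ (j + 1) * ((j : ℝ) + 1 + ((n : ℝ) ^ j)⁻¹) + (n : ℝ) ^ j * c j)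
    Δu - ((k : ℝ) + 1) * ((n : ℝ) + 1) < g ∧ g ≤ Δu - (k : ℝ) * ((n : ℝ) + 1) :=
  lemma1_bounds_general n S hS k hk c hc
end
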